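/- Let f(x) = a₂x² + a₁x + a₀ with real coefficients, a₂ > 0 and discriminant D = a₁² − 4a₀a₂ < 0, and λ > 0. Then the convergent integral I(a₀,a₁,a₂) = ∫_{-∞}^{∞} f(x)^{−λ−1} dx satisfies the box equation ∂²I/∂a₀∂a₂ = ∂²I/∂a₁² and the Euler equations a₀ ∂I/∂a₀ + a₁ ∂I/∂a₁ + a₂ ∂I/∂a₂ = −(λ+1) I and a₁ ∂I/∂a₁ + 2a₂ ∂I/∂a₂ = −I. -/

import Mathlib

/-!
With `p = -λ-1`, completing the square and rescaling `x` turns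
`I(a₀, a₁, a₂) = ∫ (a₂x² + a₁x + a₀)^p dx` into `c_p · a₂^(-(p+1)) · (4a₀a₂ - a₁²)^(p+1/2)` on the
open region `a₂ > 0`, `a₁² < 4a₀a₂`. Hence the derivative of `I` along any curve in that region is
a rational function of the coefficients times `I` itself, and the box and Euler equations reduce
to polynomial identities.
-/

open MeasureTheory Filter Topology

noncomputable def quadPeriod (p b₀ b₁ b₂ : ℝ) : ℝ :=
  ∫ x : ℝ, (b₂ * x ^ 2 + b₁ * x + b₀) ^ p

theorem HasDerivAt.rpow_mul_rpow {u v : ℝ → ℝ} {u' v' x : ℝ} (hu : HasDerivAt u u' x)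
    (hv : HasDerivAt v v' x) (hu₀ : 0 < u x) (hv₀ : 0 < v x) (α β : ℝ) :
    HasDerivAt (fun y => u y ^ α * v y ^ β)
      ((α * u' / u x + β * v' / v x) * (u x ^ α * v x ^ β)) x := by
  refine ((hu.rpow_const (Or.inl hu₀.ne')).mul (hv.rpow_const (Or.inl hv₀.ne'))).congr_deriv ?_
  rw [Real.rpow_sub_one hu₀.ne', Real.rpow_sub_one hv₀.ne']
  field_simp

theorem integral_mul_sq_add_rpow (p : ℝ) {b m : ℝ} (hb : 0 < b) (hm : 0 < m) :
    ∫ x : ℝ, (b * x ^ 2 + m) ^ p = m ^ p * √(m / b) * ∫ t : ℝ, (t ^ 2 + 1) ^ p := by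
  set a := √(b / m)
  have ha : 0 < a := by positivity
  have hsq : ∀ x : ℝ, b * x ^ 2 + m = m * ((a * x) ^ 2 + 1) := fun x => by
    rw [mul_pow, Real.sq_sqrt (by positivity)]; field_simp
  calc ∫ x : ℝ, (b * x ^ 2 + m) ^ p
      = m ^ p * ∫ x : ℝ, ((a * x) ^ 2 + 1) ^ p := by
        rw [← integral_const_mul]
        congr 1 with x
        rw [hsq, Real.mul_rpow hm.le (by positivity)]
    _ = m ^ p * √(m / b) * ∫ t : ℝ, (t ^ 2 + 1) ^ p := by
        rw [Measure.integral_comp_mul_left (fun t : ℝ => (t ^ 2 + 1) ^ p) a, smul_eq_mul,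
          abs_of_pos (inv_pos.2 ha), ← Real.sqrt_inv, inv_div, mul_assoc]

theorem quadPeriod_eq_mul_rpow (p : ℝ) {b₀ b₁ b₂ : ℝ} (h₂ : 0 < b₂)
    (hdisc : b₁ ^ 2 < 4 * b₀ * b₂) :
    quadPeriod p b₀ b₁ b₂ = (4 : ℝ) ^ (-(p + 1 / 2)) * (∫ t : ℝ, (t ^ 2 + 1) ^ p) *
      (b₂ ^ (-(p + 1)) * (4 * b₀ * b₂ - b₁ ^ 2) ^ (p + 1 / 2)) := by
  set Q := 4 * b₀ * b₂ - b₁ ^ 2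
  have hQ : 0 < Q := by linarith
  have hm : 0 < Q / (4 * b₂) := by positivity
  have hsq : ∀ x, b₂ * x ^ 2 + b₁ * x + b₀ = b₂ * (x + b₁ / (2 * b₂)) ^ 2 + Q / (4 * b₂) :=
    fun x => by field_simp; ring
  have hscale : (Q / (4 * b₂)) ^ p * √(Q / (4 * b₂) / b₂)
      = (4 : ℝ) ^ (-(p + 1 / 2)) * b₂ ^ (-(p + 1)) * Q ^ (p + 1 / 2) := by
    rw [Real.sqrt_eq_rpow, Real.div_rpow hm.le h₂.le, ← mul_div_assoc, ← Real.rpow_add hm,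
      Real.div_rpow hQ.le (by positivity), Real.mul_rpow (by norm_num) h₂.le, div_div, mul_assoc,
      ← Real.rpow_add h₂, Real.rpow_neg (by norm_num), Real.rpow_neg h₂.le,
      show p + 1 / 2 + 1 / 2 = p + 1 by ring]
    ring
  simp_rw [quadPeriod, hsq]
  rw [integral_add_right_eq_self (fun x => (b₂ * x ^ 2 + Q / (4 * b₂)) ^ p),
    integral_mul_sq_add_rpow p h₂ hm, hscale]
  ring

theorem hasDerivAt_quadPeriod_comp {γ₀ γ₁ γ₂ : ℝ → ℝ} {γ₀' γ₁' γ₂' s : ℝ} (p : ℝ)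
    (h₀ : HasDerivAt γ₀ γ₀' s) (h₁ : HasDerivAt γ₁ γ₁' s) (h₂ : HasDerivAt γ₂ γ₂' s)
    (hpos : 0 < γ₂ s) (hdisc : γ₁ s ^ 2 < 4 * γ₀ s * γ₂ s) :
    HasDerivAt (fun r => quadPeriod p (γ₀ r) (γ₁ r) (γ₂ r))
      ((-(p + 1) * γ₂' / γ₂ s + (p + 1 / 2) * (4 * γ₀' * γ₂ s + 4 * γ₀ s * γ₂' - 2 * γ₁ s * γ₁')
        / (4 * γ₀ s * γ₂ s - γ₁ s ^ 2)) * quadPeriod p (γ₀ s) (γ₁ s) (γ₂ s)) s := by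
  have hQ : HasDerivAt (fun r => 4 * γ₀ r * γ₂ r - γ₁ r ^ 2)
      (4 * γ₀' * γ₂ s + 4 * γ₀ s * γ₂' - 2 * γ₁ s * γ₁') s :=
    (((h₀.const_mul 4).mul h₂).sub (h₁.pow 2)).congr_deriv (by push_cast; ring)
  have hclosed : ∀ᶠ r in 𝓝 s, quadPeriod p (γ₀ r) (γ₁ r) (γ₂ r)
      = (4 : ℝ) ^ (-(p + 1 / 2)) * (∫ t : ℝ, (t ^ 2 + 1) ^ p) *
        (γ₂ r ^ (-(p + 1)) * (4 * γ₀ r * γ₂ r - γ₁ r ^ 2) ^ (p + 1 / 2)) := by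
    filter_upwards [h₂.continuousAt.eventually (eventually_gt_nhds hpos),
      (h₁.continuousAt.pow 2).eventually_lt ((h₀.continuousAt.const_mul 4).mul h₂.continuousAt)
        hdisc] with r hr₂ hr
    exact quadPeriod_eq_mul_rpow p hr₂ hr
  rw [quadPeriod_eq_mul_rpow p hpos hdisc]
  exact (((h₂.rpow_mul_rpow hQ hpos (by linarith) _ _).const_mul _).congr_of_eventuallyEq
    hclosed).congr_deriv (by ring)

section

variable (p : ℝ) {b₀ b₁ b₂ : ℝ}

theorem deriv_quadPeriod_b₀ (h₂ : 0 < b₂) (hdisc : b₁ ^ 2 < 4 * b₀ * b₂) :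
    deriv (fun c => quadPeriod p c b₁ b₂) b₀
      = (2 * p + 1) * 2 * b₂ / (4 * b₀ * b₂ - b₁ ^ 2) * quadPeriod p b₀ b₁ b₂ := by
  rw [(hasDerivAt_quadPeriod_comp p (hasDerivAt_id' b₀) (hasDerivAt_const b₀ b₁)
    (hasDerivAt_const b₀ b₂) h₂ hdisc).deriv]
  ring

theorem deriv_quadPeriod_b₁ (h₂ : 0 < b₂) (hdisc : b₁ ^ 2 < 4 * b₀ * b₂) :
    deriv (fun c => quadPeriod p b₀ c b₂) b₁
      = -(2 * p + 1) * b₁ / (4 * b₀ * b₂ - b₁ ^ 2) * quadPeriod p b₀ b₁ b₂ := by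
  rw [(hasDerivAt_quadPeriod_comp p (hasDerivAt_const b₁ b₀) (hasDerivAt_id' b₁)
    (hasDerivAt_const b₁ b₂) h₂ hdisc).deriv]
  ring

theorem deriv_quadPeriod_b₂ (h₂ : 0 < b₂) (hdisc : b₁ ^ 2 < 4 * b₀ * b₂) :
    deriv (fun c => quadPeriod p b₀ b₁ c) b₂
      = (-(p + 1) / b₂ + (2 * p + 1) * 2 * b₀ / (4 * b₀ * b₂ - b₁ ^ 2))
        * quadPeriod p b₀ b₁ b₂ := by
  rw [(hasDerivAt_quadPeriod_comp p (hasDerivAt_const b₂ b₀) (hasDerivAt_const b₂ b₁)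
    (hasDerivAt_id' b₂) h₂ hdisc).deriv]
  ring

theorem quadPeriod_euler_homogeneous (h₂ : 0 < b₂) (hdisc : b₁ ^ 2 < 4 * b₀ * b₂) :
    b₀ * deriv (fun c => quadPeriod p c b₁ b₂) b₀ + b₁ * deriv (fun c => quadPeriod p b₀ c b₂) b₁
      + b₂ * deriv (fun c => quadPeriod p b₀ b₁ c) b₂ = p * quadPeriod p b₀ b₁ b₂ := by
  rw [deriv_quadPeriod_b₀ p h₂ hdisc, deriv_quadPeriod_b₁ p h₂ hdisc,
    deriv_quadPeriod_b₂ p h₂ hdisc]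
  set Q := 4 * b₀ * b₂ - b₁ ^ 2 with hQ_def
  have hQ : Q ≠ 0 := (sub_pos.2 hdisc).ne'
  field_simp
  rw [hQ_def]
  ring

theorem quadPeriod_euler_weighted (h₂ : 0 < b₂) (hdisc : b₁ ^ 2 < 4 * b₀ * b₂) :
    b₁ * deriv (fun c => quadPeriod p b₀ c b₂) b₁
      + 2 * b₂ * deriv (fun c => quadPeriod p b₀ b₁ c) b₂ = -quadPeriod p b₀ b₁ b₂ := by
  rw [deriv_quadPeriod_b₁ p h₂ hdisc, deriv_quadPeriod_b₂ p h₂ hdisc]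
  set Q := 4 * b₀ * b₂ - b₁ ^ 2 with hQ_def
  have hQ : Q ≠ 0 := (sub_pos.2 hdisc).ne'
  field_simp
  rw [hQ_def]
  ring

theorem deriv_deriv_quadPeriod_b₀_b₂ (h₂ : 0 < b₂) (hdisc : b₁ ^ 2 < 4 * b₀ * b₂) :
    deriv (fun s => deriv (fun t => quadPeriod p (b₀ + s) b₁ (b₂ + t)) 0) 0
      = (2 * p + 1) * ((2 * p - 1) * b₁ ^ 2 - (4 * b₀ * b₂ - b₁ ^ 2))
        / (4 * b₀ * b₂ - b₁ ^ 2) ^ 2 * quadPeriod p b₀ b₁ b₂ := by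
  have hdisc_near : ∀ᶠ s in 𝓝 (0 : ℝ), b₁ ^ 2 < 4 * (b₀ + s) * b₂ :=
    continuousAt_const.eventually_lt (by fun_prop) (by simpa using hdisc)
  have inner : (fun s => deriv (fun t => quadPeriod p (b₀ + s) b₁ (b₂ + t)) 0)
      =ᶠ[𝓝 0] fun s => (-(p + 1) / b₂ + (2 * p + 1) * 2 * (b₀ + s) / (4 * (b₀ + s) * b₂ - b₁ ^ 2))
        * quadPeriod p (b₀ + s) b₁ b₂ := by
    filter_upwards [hdisc_near] with s hs
    rw [deriv_comp_const_add (quadPeriod p (b₀ + s) b₁), add_zero]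
    exact deriv_quadPeriod_b₂ p h₂ hs
  have hb₀ : HasDerivAt (fun s : ℝ => b₀ + s) 1 0 := (hasDerivAt_id' 0).const_add b₀
  have hQ : 4 * (b₀ + 0) * b₂ - b₁ ^ 2 ≠ 0 := by rw [add_zero]; exact (sub_pos.2 hdisc).ne'
  have hr := ((hb₀.const_mul ((2 * p + 1) * 2)).div
    (((hb₀.const_mul 4).mul_const b₂).sub_const (b₁ ^ 2)) hQ).const_add (-(p + 1) / b₂)
  have hI := hasDerivAt_quadPeriod_comp p hb₀ (hasDerivAt_const 0 b₁) (hasDerivAt_const 0 b₂)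
    (by simpa) (by simpa)
  rw [inner.deriv_eq]
  refine (hr.mul hI).deriv.trans ?_
  simp only [Pi.div_apply, add_zero, mul_zero, sub_zero, zero_div, zero_add, mul_one] at hQ ⊢
  field_simp
  ring

theorem deriv_deriv_quadPeriod_b₁_b₁ (h₂ : 0 < b₂) (hdisc : b₁ ^ 2 < 4 * b₀ * b₂) :
    deriv (fun s => deriv (fun t => quadPeriod p b₀ (b₁ + s + t) b₂) 0) 0
      = (2 * p + 1) * ((2 * p - 1) * b₁ ^ 2 - (4 * b₀ * b₂ - b₁ ^ 2))
        / (4 * b₀ * b₂ - b₁ ^ 2) ^ 2 * quadPeriod p b₀ b₁ b₂ := by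
  have hdisc_near : ∀ᶠ s in 𝓝 (0 : ℝ), (b₁ + s) ^ 2 < 4 * b₀ * b₂ :=
    (by fun_prop : ContinuousAt (fun s : ℝ => (b₁ + s) ^ 2) 0).eventually_lt continuousAt_const
      (by simpa using hdisc)
  have inner : (fun s => deriv (fun t => quadPeriod p b₀ (b₁ + s + t) b₂) 0)
      =ᶠ[𝓝 0] fun s => -(2 * p + 1) * (b₁ + s) / (4 * b₀ * b₂ - (b₁ + s) ^ 2)
        * quadPeriod p b₀ (b₁ + s) b₂ := by
    filter_upwards [hdisc_near] with s hs
    rw [deriv_comp_const_add (fun c => quadPeriod p b₀ c b₂), add_zero]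
    exact deriv_quadPeriod_b₁ p h₂ hs
  have hb₁ : HasDerivAt (fun s : ℝ => b₁ + s) 1 0 := (hasDerivAt_id' 0).const_add b₁
  have hQ : 4 * b₀ * b₂ - (b₁ + 0) ^ 2 ≠ 0 := by rw [add_zero]; exact (sub_pos.2 hdisc).ne'
  have hr := (hb₁.const_mul (-(2 * p + 1))).div ((hb₁.pow 2).const_sub (4 * b₀ * b₂)) hQ
  have hI := hasDerivAt_quadPeriod_comp p (hasDerivAt_const 0 b₀) hb₁ (hasDerivAt_const 0 b₂)
    h₂ (by simpa)
  rw [inner.deriv_eq]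
  refine (hr.mul hI).deriv.trans ?_
  simp only [Pi.div_apply, Pi.pow_apply, add_zero, mul_one] at hQ ⊢
  field_simp
  ring

end

theorem quadratic_period_A_hypergeometric_general (a₀ a₁ a₂ lam : ℝ)
    (h₂ : 0 < a₂) (hD : a₁ ^ 2 - 4 * a₀ * a₂ < 0) :
    (deriv (fun s => deriv (fun t =>
        ∫ x : ℝ, ((a₂ + t) * x ^ 2 + a₁ * x + (a₀ + s)) ^ (-(lam + 1))) 0) 0
      = deriv (fun s => deriv (fun t =>
        ∫ x : ℝ, (a₂ * x ^ 2 + (a₁ + s + t) * x + a₀) ^ (-(lam + 1))) 0) 0) ∧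
    (a₀ * deriv (fun b₀ => ∫ x : ℝ, (a₂ * x ^ 2 + a₁ * x + b₀) ^ (-(lam + 1))) a₀
      + a₁ * deriv (fun b₁ => ∫ x : ℝ, (a₂ * x ^ 2 + b₁ * x + a₀) ^ (-(lam + 1))) a₁
      + a₂ * deriv (fun b₂ => ∫ x : ℝ, (b₂ * x ^ 2 + a₁ * x + a₀) ^ (-(lam + 1))) a₂
      = -(lam + 1) * ∫ x : ℝ, (a₂ * x ^ 2 + a₁ * x + a₀) ^ (-(lam + 1))) ∧
    (a₁ * deriv (fun b₁ => ∫ x : ℝ, (a₂ * x ^ 2 + b₁ * x + a₀) ^ (-(lam + 1))) a₁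
      + 2 * a₂ * deriv (fun b₂ => ∫ x : ℝ, (b₂ * x ^ 2 + a₁ * x + a₀) ^ (-(lam + 1))) a₂
      = -∫ x : ℝ, (a₂ * x ^ 2 + a₁ * x + a₀) ^ (-(lam + 1))) := by
  have hdisc : a₁ ^ 2 < 4 * a₀ * a₂ := by linarith
  exact ⟨(deriv_deriv_quadPeriod_b₀_b₂ _ h₂ hdisc).trans
      (deriv_deriv_quadPeriod_b₁_b₁ _ h₂ hdisc).symm,
    quadPeriod_euler_homogeneous _ h₂ hdisc, quadPeriod_euler_weighted _ h₂ hdisc⟩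

/-- for `f(x) = a₂x² + a₁x + a₀` with `a₂ > 0`, negative discriminant and
`λ > 0`, the convergent integral `I(a₀,a₁,a₂) = ∫_ℝ f(x)^{-λ-1} dx` satisfies the box
equation `∂²I/∂a₀∂a₂ = ∂²I/∂a₁²` and the Euler equations
`a₀∂₀I + a₁∂₁I + a₂∂₂I = -(λ+1)I` and `a₁∂₁I + 2a₂∂₂I = -I`. -/
theorem quadratic_period_A_hypergeometric (a₀ a₁ a₂ lam : ℝ)
    (h₂ : 0 < a₂) (hD : a₁ ^ 2 - 4 * a₀ * a₂ < 0) (hlam : 0 < lam) :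
    (deriv (fun s => deriv (fun t =>
        ∫ x : ℝ, ((a₂ + t) * x ^ 2 + a₁ * x + (a₀ + s)) ^ (-(lam + 1))) 0) 0
      = deriv (fun s => deriv (fun t =>
        ∫ x : ℝ, (a₂ * x ^ 2 + (a₁ + s + t) * x + a₀) ^ (-(lam + 1))) 0) 0) ∧
    (a₀ * deriv (fun b₀ => ∫ x : ℝ, (a₂ * x ^ 2 + a₁ * x + b₀) ^ (-(lam + 1))) a₀
      + a₁ * deriv (fun b₁ => ∫ x : ℝ, (a₂ * x ^ 2 + b₁ * x + a₀) ^ (-(lam + 1))) a₁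
      + a₂ * deriv (fun b₂ => ∫ x : ℝ, (b₂ * x ^ 2 + a₁ * x + a₀) ^ (-(lam + 1))) a₂
      = -(lam + 1) * ∫ x : ℝ, (a₂ * x ^ 2 + a₁ * x + a₀) ^ (-(lam + 1))) ∧
    (a₁ * deriv (fun b₁ => ∫ x : ℝ, (a₂ * x ^ 2 + b₁ * x + a₀) ^ (-(lam + 1))) a₁
      + 2 * a₂ * deriv (fun b₂ => ∫ x : ℝ, (b₂ * x ^ 2 + a₁ * x + a₀) ^ (-(lam + 1))) a₂
      = -∫ x : ℝ, (a₂ * x ^ 2 + a₁ * x + a₀) ^ (-(lam + 1))) :=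
  quadratic_period_A_hypergeometric_general a₀ a₁ a₂ lam h₂ hD
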